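/- If g : [0,∞) → ℝ is monotone nondecreasing, then for any probability densities p, q with respect to μ, δ_g(Q,P) ≥ |δ_{|g|}(Q,P)| ≥ 0, where δ_h(Q,P) := ∫ (q - p)·h(q/p) dμ. -/

import Mathlib

open Set MeasureTheory

/-!
Since `∫ (q - p) dμ = 0`, replacing `g` by `g - g 1` and `|g|` by `|g| - |g 1|` changes neither
integral. With `t = q / p`, monotonicity gives `(t - 1) (g t - g 1) ≥ 0`, and the reverse triangle
inequality `||g t| - |g 1|| ≤ |g t - g 1|` then bounds the centred integrand of `δ_{|g|}` in absolute
value by the centred integrand of `δ_g`, pointwise.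
-/

theorem MonotoneOn.abs_sub_mul_abs_sub_abs_le {s : Set ℝ} {g : ℝ → ℝ} (hg : MonotoneOn g s)
    {a b : ℝ} (ha : a ∈ s) (hb : b ∈ s) :
    |(b - a) * (|g b| - |g a|)| ≤ (b - a) * (g b - g a) := by
  have hnonneg : 0 ≤ (b - a) * (g b - g a) := by
    simpa [mul_comm] using (monovaryOn_id_iff.2 hg).sub_mul_sub_nonneg ha hb
  rw [← abs_of_nonneg hnonneg, abs_mul, abs_mul]
  exact mul_le_mul_of_nonneg_left (abs_abs_sub_abs_le_abs_sub _ _) (abs_nonneg _)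

theorem MonotoneOn.abs_sub_mul_abs_comp_div_sub_le {g : ℝ → ℝ} (hg : MonotoneOn g (Ici 0))
    {p q : ℝ} (hp : 0 < p) (hq : 0 ≤ q) :
    |(q - p) * (|g (q / p)| - |g 1|)| ≤ (q - p) * (g (q / p) - g 1) := by
  have hqp : q - p = p * (q / p - 1) := by field_simp
  rw [hqp, mul_assoc, mul_assoc, abs_mul, abs_of_pos hp]
  exact mul_le_mul_of_nonneg_left
    (hg.abs_sub_mul_abs_sub_abs_le (mem_Ici.2 zero_le_one) (div_nonneg hq hp.le)) hp.le

theorem integral_mul_sub_const_of_integral_eq_zero {X : Type*} [MeasurableSpace X]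
    {μ : Measure X} {f h : X → ℝ} (hf : Integrable f μ) (hf0 : ∫ x, f x ∂μ = 0)
    (hfh : Integrable (fun x => f x * h x) μ) (c : ℝ) :
    Integrable (fun x => f x * (h x - c)) μ ∧ ∫ x, f x * (h x - c) ∂μ = ∫ x, f x * h x ∂μ := by
  simp only [mul_sub]
  refine ⟨hfh.sub (hf.mul_const c), ?_⟩
  rw [integral_sub hfh (hf.mul_const c), integral_mul_const, hf0, zero_mul, sub_zero]

theorem delta_divergence_abs_refinement_general
    {X : Type*} [MeasurableSpace X] (μ : Measure X)
    (p q : X → ℝ) (g : ℝ → ℝ)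
    (hq0 : ∀ x, 0 ≤ q x)
    (hppos : ∀ᵐ x ∂μ, 0 < p x)
    (hp : Integrable p μ) (hq : Integrable q μ)
    (hp1 : ∫ x, p x ∂μ = 1) (hq1 : ∫ x, q x ∂μ = 1)
    (hg : MonotoneOn g (Ici 0))
    (hint : Integrable (fun x => (q x - p x) * g (q x / p x)) μ)
    (hint2 : Integrable (fun x => (q x - p x) * |g (q x / p x)|) μ) :
    |∫ x, (q x - p x) * |g (q x / p x)| ∂μ| ≤
      ∫ x, (q x - p x) * g (q x / p x) ∂μ := by
  have hqp : Integrable (fun x => q x - p x) μ := hq.sub hp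
  have hmass : ∫ x, (q x - p x) ∂μ = 0 := by rw [integral_sub hq hp, hq1, hp1, sub_self]
  obtain ⟨-, habs⟩ := integral_mul_sub_const_of_integral_eq_zero hqp hmass hint2 |g 1|
  obtain ⟨hint1, hsigned⟩ := integral_mul_sub_const_of_integral_eq_zero hqp hmass hint (g 1)
  rw [← habs, ← hsigned, ← Real.norm_eq_abs]
  refine norm_integral_le_of_norm_le hint1 ?_
  filter_upwards [hppos] with x hx
  exact hg.abs_sub_mul_abs_comp_div_sub_le hx (hq0 x)

theorem delta_divergence_abs_refinement
    {X : Type*} [MeasurableSpace X] (μ : Measure X)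
    (p q : X → ℝ) (g : ℝ → ℝ)
    (hp0 : ∀ x, 0 ≤ p x) (hq0 : ∀ x, 0 ≤ q x)
    (hppos : ∀ᵐ x ∂μ, 0 < p x)
    (hpm : Measurable p) (hqm : Measurable q) (hgm : Measurable g)
    (hp : Integrable p μ) (hq : Integrable q μ)
    (hp1 : ∫ x, p x ∂μ = 1) (hq1 : ∫ x, q x ∂μ = 1)
    (hg : MonotoneOn g (Ici 0))
    (hint : Integrable (fun x => (q x - p x) * g (q x / p x)) μ)
    (hint2 : Integrable (fun x => (q x - p x) * |g (q x / p x)|) μ) :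
    |∫ x, (q x - p x) * |g (q x / p x)| ∂μ| ≤
      ∫ x, (q x - p x) * g (q x / p x) ∂μ :=
  delta_divergence_abs_refinement_general μ p q g hq0 hppos hp hq hp1 hq1 hg hint hint2
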